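/- Let A be a unital Banach algebra and p, q idempotents with ‖p - q‖ < 1. Then there exists an invertible element u in the connected component of the identity of the group of units of A such that u p = q u. -/

import Mathlib

/-!
With `u = q p + (1 - q)(1 - p)` and `v = p q + (1 - p)(1 - q)` one has `u p = q u`,
`u v = v u = 1 - (p - q)²` and `u + v = 2 (1 - (p - q)²)`. Pairing the point `s + (1 - s) u`
of the segment from `1` to `u` with `s + (1 - s) v` gives, on both sides, the product
`1 - (1 - s²)(p - q)²`, which is invertible by the Neumann series because `‖(p - q)²‖ < 1`.
So the whole segment consists of units, and it connects `u` to `1`.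
-/

open Set

theorem isUnit_of_isUnit_mul_of_isUnit_mul {M : Type*} [Monoid M] {a b : M}
    (hab : IsUnit (a * b)) (hba : IsUnit (b * a)) : IsUnit a :=
  isUnit_iff_exists_and_exists.mpr
    ⟨⟨b * hab.unit⁻¹, by rw [← mul_assoc, hab.mul_val_inv]⟩,
      ⟨hba.unit⁻¹ * b, by rw [mul_assoc, hba.val_inv_mul]⟩⟩

section Intertwiner

variable {R : Type*} [Ring R] {p q : R}

def idempotentIntertwiner (p q : R) : R := q * p + (1 - q) * (1 - p)

theorem idempotentIntertwiner_mul (hp : IsIdempotentElem p) (hq : IsIdempotentElem q) :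
    idempotentIntertwiner p q * p = q * idempotentIntertwiner p q := by
  have hq' : ∀ z, q * (q * z) = q * z := fun z => by rw [← mul_assoc, hq.eq]
  simp only [idempotentIntertwiner, sub_mul, mul_sub, add_mul, mul_add, one_mul, mul_one,
    mul_assoc, hp.eq, hq.eq, hq']
  noncomm_ring

theorem idempotentIntertwiner_mul_idempotentIntertwiner (hp : IsIdempotentElem p)
    (hq : IsIdempotentElem q) :
    idempotentIntertwiner p q * idempotentIntertwiner q p = 1 - (p - q) ^ 2 := by
  have hp' : ∀ z, p * (p * z) = p * z := fun z => by rw [← mul_assoc, hp.eq]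
  simp only [idempotentIntertwiner, sq, sub_mul, mul_sub, add_mul, mul_add, one_mul, mul_one,
    mul_assoc, hp.eq, hq.eq, hp']
  noncomm_ring

theorem idempotentIntertwiner_add_idempotentIntertwiner (hp : IsIdempotentElem p)
    (hq : IsIdempotentElem q) :
    idempotentIntertwiner p q + idempotentIntertwiner q p = 2 * (1 - (p - q) ^ 2) := by
  rw [two_mul]
  simp only [idempotentIntertwiner, sq, sub_mul, mul_sub, one_mul, mul_one, hp.eq, hq.eq]
  noncomm_ring

end Intertwiner

section Segment

variable {A : Type*} [NormedRing A] [NormedAlgebra ℝ A]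

theorem smul_one_add_smul_mul_smul_one_add_smul {u v c : A} (huv : u * v = 1 - c)
    (hadd : u + v = 2 * (1 - c)) (s : ℝ) :
    (s • 1 + (1 - s) • u) * (s • 1 + (1 - s) • v) = 1 - (1 - s ^ 2) • c :=
  calc (s • 1 + (1 - s) • u) * (s • 1 + (1 - s) • v)
      = (s * s) • 1 + (s * (1 - s)) • (u + v) + ((1 - s) * (1 - s)) • (u * v) := by
        simp only [add_mul, mul_add, smul_mul_smul_comm, one_mul, mul_one]
        module
    _ = 1 - (1 - s ^ 2) • c := by
        rw [hadd, huv, two_mul]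
        module

theorem segment_one_subset_isUnit [HasSummableGeomSeries A] {u v c : A}
    (huv : u * v = 1 - c) (hvu : v * u = 1 - c) (hadd : u + v = 2 * (1 - c)) (hc : ‖c‖ < 1) :
    segment ℝ 1 u ⊆ {a | IsUnit a} := by
  rintro _ ⟨s, t, hs, ht, hst, rfl⟩
  obtain rfl : t = 1 - s := by linarith
  have hnorm : ‖(1 - s ^ 2) • c‖ < 1 := by
    rw [norm_smul, Real.norm_of_nonneg (by nlinarith)]
    nlinarith [norm_nonneg c]
  have hprod := isUnit_one_sub_of_norm_lt_one hnorm
  refine isUnit_of_isUnit_mul_of_isUnit_mul (b := s • 1 + (1 - s) • v) ?_ ?_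
  · rwa [smul_one_add_smul_mul_smul_one_add_smul huv hadd]
  · rwa [smul_one_add_smul_mul_smul_one_add_smul hvu (by rwa [add_comm])]

theorem Units.mem_connectedComponent_one_of_segment_subset [HasSummableGeomSeries A] {u : Aˣ}
    (h : segment ℝ 1 (u : A) ⊆ {a | IsUnit a}) : u ∈ connectedComponent 1 := by
  have hS : IsPreconnected (((↑) : Aˣ → A) ⁻¹' segment ℝ 1 (u : A)) := by
    rw [← Units.isOpenEmbedding_val.isInducing.isPreconnected_image,
      image_preimage_eq_of_subset h]
    exact (convex_segment _ _).isPreconnected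
  exact hS.subset_connectedComponent (left_mem_segment ℝ _ _) (right_mem_segment ℝ _ _)

end Segment

theorem exists_unit_conjugating_idempotents
    {A : Type*} [NormedRing A] [NormedAlgebra ℂ A] [CompleteSpace A]
    (p q : A) (hp : p * p = p) (hq : q * q = q) (hpq : ‖p - q‖ < 1) :
    ∃ u : Aˣ, u ∈ connectedComponent (1 : Aˣ) ∧ (u : A) * p = q * (u : A) := by
  have hc : ‖(p - q) ^ 2‖ < 1 :=
    (norm_pow_le' _ two_pos).trans_lt (pow_lt_one₀ (norm_nonneg _) hpq two_ne_zero)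
  have hseg : segment ℝ 1 (idempotentIntertwiner p q) ⊆ {a | IsUnit a} :=
    segment_one_subset_isUnit (idempotentIntertwiner_mul_idempotentIntertwiner hp hq)
      (by rw [idempotentIntertwiner_mul_idempotentIntertwiner hq hp, ← neg_sub p q, neg_sq])
      (idempotentIntertwiner_add_idempotentIntertwiner hp hq) hc
  have hu : IsUnit (idempotentIntertwiner p q) := hseg (right_mem_segment ℝ _ _)
  exact ⟨hu.unit, Units.mem_connectedComponent_one_of_segment_subset hseg,
    idempotentIntertwiner_mul hp hq⟩
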